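/- arXiv:1708.02419 — 5 statements merged into one kernel-verified Lean document; each statement's English description precedes it below -/
import Mathlib

section
/- The relabel operation preserves the validity of the height function: if h is a valid height function for pre-flow f, node u satisfies x_f(u) > 0 and h(u) ≤ h(v) for all residual edges (u,v) ∈ E_f, and u has at least one outgoing residual edge, then setting h'(u) = 1 + min{h(v) : (u,v) ∈ E_f} and h'(w) = h(w) for w ≠ u yields a valid height function h' with h'(u) > h(u). -/
/-- The relabel operation preserves validity of the height
function and strictly increases the height of the relabeled node. -/
theorem relabel_preserves_valid_height {V : Type*} [Fintype V] [DecidableEq V]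
    (c : V → V → ℝ) (s t : V) (f : V → V → ℝ)
    (Ef : V → V → Prop) (hEf : ∀ a b, Ef a b ↔ 0 < c a b - f a b)
    (h : V → ℕ)
    (hvalid : h s = Fintype.card V ∧ h t = 0 ∧ ∀ a b, Ef a b → h a ≤ h b + 1)
    (u : V) (hus : u ≠ s) (hut : u ≠ t)
    (excess : V → ℝ)
    (hexcess : ∀ w, excess w = (∑ z, f z w) - ∑ z, f w z)
    (hx : 0 < excess u)
    (hnolow : ∀ v, Ef u v → h u ≤ h v)
    (hout : ∃ v, Ef u v)
    (h' : V → ℕ)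
    (hh'u : h' u = 1 + sInf {n : ℕ | ∃ v, Ef u v ∧ h v = n})
    (hh'w : ∀ w, w ≠ u → h' w = h w) :
    (h' s = Fintype.card V ∧ h' t = 0 ∧ ∀ a b, Ef a b → h' a ≤ h' b + 1) ∧
    h u < h' u := by
  obtain ⟨v0, hv0⟩ := hout
  have hne : {n : ℕ | ∃ v, Ef u v ∧ h v = n}.Nonempty := ⟨h v0, v0, hv0, rfl⟩
  obtain ⟨vm, hvm, hvmh⟩ := Nat.sInf_mem hne
  have hlt : h u < h' u := by
    rw [hh'u]
    have := hnolow vm hvm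
    omega
  refine ⟨⟨?_, ?_, ?_⟩, hlt⟩
  · rw [hh'w s (Ne.symm hus)]; exact hvalid.1
  · rw [hh'w t (Ne.symm hut)]; exact hvalid.2.1
  · intro a b hab
    by_cases ha : a = u
    · by_cases hb : b = u
      · rw [ha, hb]; omega
      · rw [hh'w b hb, ha, hh'u]
        have : sInf {n : ℕ | ∃ v, Ef u v ∧ h v = n} ≤ h b :=
          Nat.sInf_le ⟨b, ha ▸ hab, rfl⟩
        omega
    · rw [hh'w a ha]
      by_cases hb : b = u
      · rw [hb]
        have := hvalid.2.2 a b hab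
        rw [hb] at this
        omega
      · rw [hh'w b hb]; exact hvalid.2.2 a b hab
end

section
/- If h is a valid height function for a pre-flow f, then there is no augmenting path from s to t in the residual graph G_f. -/
/-- If h is a valid height function for a pre-flow f, then there
is no (simple) augmenting path from s to t in the residual graph. -/
theorem no_augmenting_path {V : Type*} [Fintype V]
    (c : V → V → ℝ) (s t : V) (f : V → V → ℝ)
    (h : V → ℕ)
    (hvalid : h s = Fintype.card V ∧ h t = 0 ∧
      ∀ a b, 0 < c a b - f a b → h a ≤ h b + 1) :
    ¬ ∃ (m : ℕ) (p : Fin (m + 1) → V), Function.Injective p ∧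
      p 0 = s ∧ p (Fin.last m) = t ∧
      ∀ i : Fin m, 0 < c (p i.castSucc) (p i.succ) - f (p i.castSucc) (p i.succ) := by
  obtain ⟨hs, ht, hstep⟩ := hvalid
  rintro ⟨m, p, hinj, hp0, hplast, hedge⟩
  -- claim: for k ≤ m, h (p ⟨m - k, _⟩) ≤ k
  have key : ∀ k, k ≤ m → h (p ⟨m - k, by omega⟩) ≤ k := by
    intro k
    induction k with
    | zero =>
      intro _
      have : (⟨m - 0, by omega⟩ : Fin (m+1)) = Fin.last m := by
        ext; simp
      rw [this, hplast, ht]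
    | succ k ih =>
      intro hk
      have hk' : k ≤ m := by omega
      have hmk : m - (k+1) < m := by omega
      have hedge' := hedge ⟨m - (k+1), hmk⟩
      have hc : (Fin.castSucc ⟨m - (k+1), hmk⟩ : Fin (m+1)) = ⟨m - (k+1), by omega⟩ := rfl
      have hsucc : (Fin.succ ⟨m - (k+1), hmk⟩ : Fin (m+1)) = ⟨m - k, by omega⟩ := by
        ext; simp [Fin.succ]; omega
      rw [hc, hsucc] at hedge'
      have := hstep _ _ hedge'
      have := ih hk'
      omega
  have hsm : h s ≤ m := by
    have := key m le_rfl
    simpa [hp0] using this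
  have hcard : m + 1 ≤ Fintype.card V := by simpa using Fintype.card_le_of_injective p hinj
  omega
end

section
/- If the total locked capacity satisfies L(u,v) ≤ c(u,v) before a locked-push of commodity i on edge (u,v) with amount δ = min(x_i(u), c_i(u,v)) where c_i(u,v) = c(u,v) - L(u,v) + l_i(v,u) > 0, then after updating f_i(u,v) += δ, f_i(v,u) -= δ, and recomputing locks, the new total locked capacity L'(u,v) still satisfies L'(u,v) ≤ c(u,v). -/
open Finset

/-- A locked-push preserves the invariant L(u,v) ≤ c(u,v). -/
theorem locked_push_preserves_lock_bound {V : Type*} [DecidableEq V] {k : ℕ}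
    (c : V → V → ℝ) (u v : V) (huv : u ≠ v) (hc : 0 ≤ c u v)
    (f : Fin k → V → V → ℝ)
    (hskew : ∀ i a b, f i a b = - f i b a)
    (l : Fin k → V → V → ℝ) (hl : ∀ i a b, l i a b = max 0 (f i a b))
    (L : V → V → ℝ) (hL : ∀ a b, L a b = ∑ j, l j a b)
    (hLc : L u v ≤ c u v)
    (i : Fin k)
    (xi : ℝ) (hxi : 0 < xi)
    (ci : ℝ) (hci : ci = c u v - L u v + l i v u) (hcipos : 0 < ci)
    (δ : ℝ) (hδ : δ = min xi ci)
    (f' : Fin k → V → V → ℝ)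
    (hf' : ∀ j a b, f' j a b =
      if j = i ∧ a = u ∧ b = v then f i u v + δ
      else if j = i ∧ a = v ∧ b = u then f i v u - δ
      else f j a b)
    (l' : Fin k → V → V → ℝ) (hl' : ∀ j a b, l' j a b = max 0 (f' j a b))
    (L' : V → V → ℝ) (hL' : ∀ a b, L' a b = ∑ j, l' j a b) :
    L' u v ≤ c u v := by
  have h1 : f' i u v = f i u v + δ := by rw [hf']; simp
  have hdiff : ∑ j, l' j u v - ∑ j, l j u v = l' i u v - l i u v := by
    rw [← Finset.sum_sub_distrib]
    apply Finset.sum_eq_single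
    · intro j _ hj
      have : f' j u v = f j u v := by rw [hf']; simp [hj]
      rw [hl', hl, this, sub_self]
    · intro h; exact absurd (Finset.mem_univ i) h
  have hLeq : L' u v = L u v + (l' i u v - l i u v) := by
    rw [hL', hL]; linarith [hdiff]
  have hδci : δ ≤ ci := by rw [hδ]; exact min_le_right _ _
  have hδpos : 0 < δ := by rw [hδ]; exact lt_min hxi hcipos
  have hlvu : l i v u = max 0 (- f i u v) := by rw [hl, hskew i v u]
  have hliuv : l i u v = max 0 (f i u v) := hl i u v
  have hl'i : l' i u v = max 0 (f i u v + δ) := by rw [hl', h1]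
  rw [hLeq, hl'i, hliuv]
  rcases le_or_gt 0 (f i u v) with hf0 | hf0
  · rw [max_eq_right hf0]
    have : max 0 (-f i u v) = 0 := max_eq_left (by linarith)
    rw [this] at hlvu
    have : max 0 (f i u v + δ) = f i u v + δ := max_eq_right (by linarith)
    rw [this]; linarith
  · rw [max_eq_left (le_of_lt hf0)]
    have : max 0 (-f i u v) = -f i u v := max_eq_right (by linarith)
    rw [this] at hlvu
    have hm : max 0 (f i u v + δ) ≤ c u v - L u v := by
      apply max_le (by linarith) (by linarith)
    linarith
end

section
/- If h is a valid height function for a pre-flow f and v is a node with positive excess x_f(v) > 0 (v ≠ s, t), then there exists a path in the residual graph from v to the source s. -/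
open Finset

private lemma reflTransGen_to_path {V : Type*} (r : V → V → Prop) (s : V) :
    ∀ u, Relation.ReflTransGen r u s →
      ∃ (m : ℕ) (p : Fin (m + 1) → V), p 0 = u ∧ p (Fin.last m) = s ∧
        ∀ i : Fin m, r (p i.castSucc) (p i.succ) := by
  intro u hu
  induction hu using Relation.ReflTransGen.head_induction_on with
  | refl =>
    exact ⟨0, fun _ => s, rfl, rfl, fun i => i.elim0⟩
  | head hab _ ih =>
    rename_i a b _
    obtain ⟨m, p, hp0, hplast, hpe⟩ := ih
    refine ⟨m + 1, Fin.cons a p, by simp, ?_, ?_⟩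
    · have : Fin.last (m + 1) = (Fin.last m).succ := rfl
      rw [this, Fin.cons_succ]; exact hplast
    · intro i
      induction i using Fin.cases with
      | zero =>
        have e1 : (0 : Fin (m+1)).castSucc = 0 := rfl
        have e2 : (0 : Fin (m+1)).succ = Fin.succ 0 := rfl
        rw [e1, e2, Fin.cons_zero, Fin.cons_succ, hp0]
        exact hab
      | succ j =>
        have h1 : (Fin.succ j).castSucc = Fin.succ j.castSucc := (Fin.succ_castSucc j).symm
        rw [h1, Fin.cons_succ, Fin.cons_succ]
        exact hpe j

/-- If h is a valid height function for a pre-flow f and v has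
positive excess, then there is a residual path from v to the source s. -/
theorem excess_has_residual_path_to_source {V : Type*} [Fintype V]
    (c : V → V → ℝ) (hc : ∀ a b, 0 ≤ c a b)
    (s t : V) (f : V → V → ℝ)
    (hcap : ∀ a b, f a b ≤ c a b)
    (hskew : ∀ a b, f a b = - f b a)
    (excess : V → ℝ)
    (hexcess : ∀ w, excess w = (∑ z, f z w) - ∑ z, f w z)
    (hpre : ∀ w, w ≠ s → 0 ≤ excess w)
    (h : V → ℕ)
    (hvalid : h s = Fintype.card V ∧ h t = 0 ∧
      ∀ a b, 0 < c a b - f a b → h a ≤ h b + 1)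
    (v : V) (hv : 0 < excess v) (hvs : v ≠ s) (hvt : v ≠ t) :
    ∃ (m : ℕ) (p : Fin (m + 1) → V), p 0 = v ∧ p (Fin.last m) = s ∧
      ∀ i : Fin m, 0 < c (p i.castSucc) (p i.succ) - f (p i.castSucc) (p i.succ) := by
  classical
  set r : V → V → Prop := fun a b => 0 < c a b - f a b with hr
  suffices hreach : Relation.ReflTransGen r v s by
    exact reflTransGen_to_path r s v hreach
  by_contra hns
  -- S: set of nodes reachable from v
  set S : Finset V := univ.filter (fun u => Relation.ReflTransGen r v u) with hS
  have hvS : v ∈ S := mem_filter.2 ⟨mem_univ v, Relation.ReflTransGen.refl⟩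
  have hsS : s ∉ S := by simp [hS, hns]
  -- no residual edge leaves S
  have hout : ∀ u ∈ S, ∀ z ∉ S, f z u ≤ 0 := by
    intro u hu z hz
    have hru : ¬ r u z := by
      intro hrz
      apply hz
      simp only [hS, mem_filter, mem_univ, true_and] at hu ⊢
      exact hu.tail hrz
    have : c u z - f u z ≤ 0 := le_of_not_gt hru
    have h1 : 0 ≤ f u z := le_trans (hc u z) (by linarith)
    rw [hskew z u]; linarith
  -- total excess in S is positive
  have hpos : 0 < ∑ u ∈ S, excess u := by
    have : ∑ u ∈ S, excess u = excess v + ∑ u ∈ S.erase v, excess u := by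
      rw [Finset.add_sum_erase _ _ hvS]
    rw [this]
    have h2 : 0 ≤ ∑ u ∈ S.erase v, excess u := by
      apply Finset.sum_nonneg
      intro u hu
      apply hpre
      intro h3; subst h3
      exact hsS (Finset.mem_of_mem_erase hu)
    linarith
  -- total excess in S is nonpositive
  have hneg : ∑ u ∈ S, excess u ≤ 0 := by
    have hsplit : ∑ u ∈ S, excess u
        = ∑ u ∈ S, ∑ z ∈ Sᶜ, (f z u - f u z) := by
      have : ∀ u ∈ S, excess u = ∑ z ∈ Sᶜ, (f z u - f u z) + ∑ z ∈ S, (f z u - f u z) := by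
        intro u _
        rw [hexcess u, ← Finset.sum_sub_distrib,
          ← Finset.sum_add_sum_compl S (fun z => f z u - f u z)]
        ring
      rw [Finset.sum_congr rfl this, Finset.sum_add_distrib]
      have hzero : ∑ u ∈ S, ∑ z ∈ S, (f z u - f u z) = 0 := by
        have := Finset.sum_comm (s := S) (t := S) (f := fun u z => f z u)
        simp only [Finset.sum_sub_distrib]
        rw [this]
        ring
      rw [hzero, add_zero]
    rw [hsplit]
    apply Finset.sum_nonpos
    intro u hu
    apply Finset.sum_nonpos
    intro z hz
    have hz' : z ∉ S := by simpa using hz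
    have h1 := hout u hu z hz'
    have h2 : 0 ≤ f u z := by rw [hskew u z]; linarith
    linarith
  linarith
end

section
/- During execution of the push-relabel algorithm, node heights never decrease and each relabel strictly increases the height of the relabeled node by at least 1; consequently, since valid heights are bounded by 2|V| - 1 for nodes with excess, each node is relabeled at most 2|V| - 1 times. -/
open Finset

/-- From any chain we can extract a nodup chain with the same endpoints,
whose elements are among the original ones. -/
lemma exists_nodup_chain_aux {α : Type*} {r : α → α → Prop} :
    ∀ (n : ℕ) (l : List α) (a b : α), l.length ≤ n → List.Chain r a l →
      (a :: l).getLast (List.cons_ne_nil _ _) = b →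
      ∃ l' : List α, (a :: l').Nodup ∧ List.Chain r a l' ∧
        (a :: l').getLast (List.cons_ne_nil _ _) = b ∧
        ∀ x ∈ a :: l', x ∈ a :: l := by
  intro n
  induction n with
  | zero =>
    intro l a b hlen hchain hlast
    rw [List.length_eq_zero_iff.1 (Nat.le_zero.1 hlen)] at hchain hlast ⊢
    exact ⟨[], by simp, List.Chain.nil, hlast, by simp⟩
  | succ n ih =>
    intro l a b hlen hchain hlast
    by_cases ha : a ∈ l
    · obtain ⟨l₁, l₂, rfl⟩ := List.append_of_mem ha
      have hsplit := (List.isChain_cons_split (l₁ := l₁) (l₂ := l₂) (a := a) (c := a)).1 hchain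
      have hlast2 : (a :: l₂).getLast (List.cons_ne_nil _ _) = b := by
        rw [← hlast]
        exact (List.getLast_append_of_ne_nil (l := a :: l₁) (l' := a :: l₂) (List.cons_ne_nil _ _) (List.cons_ne_nil _ _)).symm
      have hlen2 : l₂.length ≤ n := by
        simp only [List.length_append, List.length_cons] at hlen; omega
      obtain ⟨l', h1, h2, h3, h4⟩ := ih l₂ a b hlen2 hsplit.2 hlast2
      exact ⟨l', h1, h2, h3, fun x hx => by
        have := h4 x hx
        simp only [List.mem_cons, List.mem_append] at this ⊢
        tauto⟩
    · cases l with
      | nil =>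
        exact ⟨[], by simp, List.Chain.nil, hlast, by simp⟩
      | cons d l'' =>
        obtain ⟨had, hchain'⟩ := List.isChain_cons_cons.1 hchain
        have hlast2 : (d :: l'').getLast (List.cons_ne_nil _ _) = b := by
          rw [← hlast, List.getLast_cons_cons]
        obtain ⟨l', h1, h2, h3, h4⟩ := ih l'' d b (by simp at hlen; omega) hchain' hlast2
        refine ⟨d :: l', ?_, List.Chain.cons had h2, by
          rw [List.getLast_cons_cons]; exact h3, fun x hx => ?_⟩
        · refine List.nodup_cons.2 ⟨fun hmem => ha ?_, h1⟩
          have := h4 a hmem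
          simpa using this
        · simp only [List.mem_cons] at hx
          rcases hx with rfl | hx
          · simp
          · have := h4 x (List.mem_cons.2 hx)
            simp only [List.mem_cons] at this ⊢
            tauto

lemma height_le_along_chain {α : Type*} {r : α → α → Prop} (h : α → ℕ)
    (hr : ∀ x y, r x y → h x ≤ h y + 1) :
    ∀ (l : List α) (a : α), List.Chain r a l →
      h a ≤ h ((a :: l).getLast (List.cons_ne_nil _ _)) + l.length := by
  intro l
  induction l with
  | nil => intro a _; simp
  | cons d l ih =>
    intro a hchain
    obtain ⟨had, hchain'⟩ := List.isChain_cons_cons.1 hchain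
    have := ih d hchain'
    rw [List.getLast_cons_cons]
    have h1 := hr a d had
    simp only [List.length_cons]
    omega

/-- A relabel strictly increases the height of the relabeled
node by at least 1, and for a valid height function heights of nodes with
excess are bounded by 2|V| - 1 (hence each node is relabeled at most
2|V| - 1 times). -/
theorem relabel_increase_and_height_bound {V : Type*} [Fintype V]
    (c : V → V → ℝ) (hc : ∀ a b, 0 ≤ c a b)
    (s t : V) (f : V → V → ℝ)
    (hcap : ∀ a b, f a b ≤ c a b)
    (hskew : ∀ a b, f a b = - f b a)
    (excess : V → ℝ)
    (hexcess : ∀ w, excess w = (∑ z, f z w) - ∑ z, f w z)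
    (hpre : ∀ w, w ≠ s → 0 ≤ excess w)
    (h : V → ℕ)
    (hvalid : h s = Fintype.card V ∧ h t = 0 ∧
      ∀ a b, 0 < c a b - f a b → h a ≤ h b + 1) :
    (∀ u : V, 0 < excess u → (∀ v, 0 < c u v - f u v → h u ≤ h v) →
      (∃ v, 0 < c u v - f u v) →
      h u + 1 ≤ 1 + sInf {n : ℕ | ∃ v, 0 < c u v - f u v ∧ h v = n}) ∧
    (∀ u : V, 0 < excess u → h u ≤ 2 * Fintype.card V - 1) := by
  classical
  obtain ⟨hs, ht, hval⟩ := hvalid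
  constructor
  · -- relabel strictly increases height
    intro u _ hmin ⟨v, hv⟩
    have hne : (h v) ∈ {n : ℕ | ∃ w, 0 < c u w - f u w ∧ h w = n} := ⟨v, hv, rfl⟩
    have hmem := Nat.sInf_mem (Set.nonempty_of_mem hne)
    obtain ⟨w, hw, hweq⟩ := hmem
    have := hmin w hw
    omega
  · -- height bound for nodes with excess
    intro u hu
    -- residual relation
    set r : V → V → Prop := fun a b => 0 < c a b - f a b with hr
    -- the set of nodes reachable from u via residual edges
    set A : Finset V := Finset.univ.filter (fun v => Relation.ReflTransGen r u v) with hA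
    have huA : u ∈ A := by
      simp only [hA, Finset.mem_filter, Finset.mem_univ, true_and]
      exact Relation.ReflTransGen.refl
    -- s is reachable from u
    have hsA : s ∈ A := by
      by_contra hsA
      -- sum of excess over A is positive
      have hpos : 0 < ∑ w ∈ A, excess w := by
        have h1 : ∀ w ∈ A, w ≠ s → 0 ≤ excess w := fun w _ hw => hpre w hw
        have : ∀ w ∈ A, 0 ≤ excess w := by
          intro w hw
          rcases eq_or_ne w s with rfl | hws
          · exact absurd hw hsA
          · exact hpre w hws
        calc (0:ℝ) < excess u := hu
        _ ≤ ∑ w ∈ A, excess w := Finset.single_le_sum this huA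
      -- but it is also nonpositive
      have hnonpos : ∑ w ∈ A, excess w ≤ 0 := by
        have hsum : ∑ w ∈ A, excess w
            = ∑ w ∈ A, ((∑ z ∈ A, (f z w - f w z)) + ∑ z ∈ Aᶜ, (f z w - f w z)) := by
          refine Finset.sum_congr rfl fun w _ => ?_
          rw [hexcess w, Finset.sum_add_sum_compl A (fun z => f z w - f w z),
            Finset.sum_sub_distrib]
        have hzero : ∑ w ∈ A, ∑ z ∈ A, (f z w - f w z) = 0 := by
          have h2 : ∑ w ∈ A, ∑ z ∈ A, (f z w - f w z)
              = ∑ w ∈ A, ∑ z ∈ A, (f w z - f z w) := Finset.sum_comm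
          have h3 : ∑ w ∈ A, ∑ z ∈ A, (f w z - f z w)
              = -∑ w ∈ A, ∑ z ∈ A, (f z w - f w z) := by
            rw [← Finset.sum_neg_distrib]
            refine Finset.sum_congr rfl fun w _ => ?_
            rw [← Finset.sum_neg_distrib]
            exact Finset.sum_congr rfl fun z _ => by ring
          linarith
        have hneg : ∑ w ∈ A, ∑ z ∈ Aᶜ, (f z w - f w z) ≤ 0 := by
          refine Finset.sum_nonpos fun w hw => Finset.sum_nonpos fun z hz => ?_
          have hzA : z ∉ A := Finset.mem_compl.1 hz
          -- no residual edge from w to z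
          have hnr : ¬ r w z := by
            intro hrel
            exact hzA (by
              simp only [hA, Finset.mem_filter, Finset.mem_univ, true_and] at hw ⊢
              exact hw.tail hrel)
          have : c w z ≤ f w z := by
            simp only [hr, sub_pos, not_lt] at hnr
            exact hnr
          have h0 : 0 ≤ f w z := le_trans (hc w z) this
          have := hskew z w
          linarith
        rw [hsum, Finset.sum_add_distrib, hzero, zero_add]
        exact hneg
      linarith
    -- extract a nodup residual chain from u to s
    have hreach : Relation.ReflTransGen r u s := by
      simpa [hA] using hsA
    obtain ⟨l, hl1, hl2⟩ := List.exists_isChain_cons_of_relationReflTransGen hreach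
    obtain ⟨l', hn, hch, hlast, _⟩ :=
      exists_nodup_chain_aux l.length l u s le_rfl hl1 hl2
    have hlen : l'.length + 1 ≤ Fintype.card V := by
      have := List.Nodup.length_le_card hn
      simpa using this
    have hht := height_le_along_chain h (fun x y hxy => hval x y hxy) l' u hch
    rw [hlast] at hht
    have hcard : 1 ≤ Fintype.card V := Fintype.card_pos_iff.2 ⟨u⟩
    omega
end
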